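/- Let λ, μ ≥ 0 with λ + μ = 1, and let z ∈ ℝ. For any (p, r, q) ∈ ℤ² × ℕ with q ≥ 1, there exists (a, b, c) ∈ ℤ³ with (a, b) ≠ (0, 0) such that ap + br + cq = 0, |a| ≤ q^λ, and |b + za| ≤ q^μ. -/

import Mathlib

/-!
The pairs `(a, b)` for which some `c` solves `a p + b r + c q = 0` form a lattice of index at
most `q` in `ℤ²`, and the box `|a| ≤ q ^ λ`, `|b + z a| ≤ q ^ μ` has area `4 q`, so Minkowski's
theorem predicts a nonzero lattice point in it. Concretely, with `g = gcd(r, q)` the lattice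
contains `(g, b₁)` and `(0, q / g)` for a suitable `b₁`. If `g` exceeds the width `q ^ λ`, the
vertical vector `(0, q / g)` already fits; otherwise Dirichlet's approximation theorem applied to
`(b₁ + z g) / (q / g)` with denominators up to `⌊q ^ λ / g⌋` supplies a multiple of `(g, b₁)`
that can be corrected by a multiple of `(0, q / g)`.
-/

open Real

theorem exists_ne_zero_triangular_lattice_point {g q₀ : ℕ} (hg : 0 < g) (hq₀ : 0 < q₀) (b : ℤ)
    (z : ℝ) {X Y : ℝ} (hX : 0 ≤ X) (hcov : (g : ℝ) * q₀ ≤ X * Y) :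
    ∃ a b' : ℤ, (a, b') ≠ (0, 0) ∧ (∃ k j : ℤ, a = k * g ∧ b' = k * b - j * q₀) ∧
      |(a : ℝ)| ≤ X ∧ |(b' : ℝ) + z * a| ≤ Y := by
  have hgR : (0 : ℝ) < g := by exact_mod_cast hg
  have hq₀R : (0 : ℝ) < q₀ := by exact_mod_cast hq₀
  have hY : 0 < Y := pos_of_mul_pos_right (hcov.trans_lt' (by positivity)) hX
  by_cases hgX : (g : ℝ) ≤ X
  · set K := ⌊X / g⌋₊
    have hK : 0 < K := Nat.floor_pos.mpr ((one_le_div hgR).mpr hgX)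
    have hKX : (K : ℝ) * g ≤ X := (le_div_iff₀ hgR).mp (Nat.floor_le (by positivity))
    have hXK : X < (K + 1) * g := (div_lt_iff₀ hgR).mp (Nat.lt_floor_add_one _)
    obtain ⟨j, k, hk, hkK, hjk⟩ := Real.exists_int_int_abs_mul_sub_le ((b + z * g) / q₀) hK
    have hkR : (0 : ℝ) < k := by exact_mod_cast hk
    have hkKR : (k : ℝ) ≤ K := by exact_mod_cast hkK
    refine ⟨k * g, k * b - j * q₀, fun h => ?_, ⟨k, j, rfl, rfl⟩, ?_, ?_⟩
    · exact (mul_pos hk (by exact_mod_cast hg)).ne' (Prod.mk.inj h).1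
    · push_cast
      rw [abs_of_pos (by positivity)]
      nlinarith
    · have hval : ((k * b - j * q₀ : ℤ) : ℝ) + z * (k * g : ℤ) =
          q₀ * (k * ((b + z * g) / q₀) - j) := by
        field_simp
        push_cast
        ring
      have hq₀Y : (q₀ : ℝ) / (K + 1) ≤ Y := by
        rw [div_le_iff₀ (by positivity)]
        nlinarith [mul_lt_mul_of_pos_left hXK hY]
      calc |((k * b - j * q₀ : ℤ) : ℝ) + z * (k * g : ℤ)|
          = q₀ * |k * ((b + z * g) / q₀) - j| := by rw [hval, abs_mul, abs_of_pos hq₀R]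
        _ ≤ q₀ * (1 / (K + 1)) := mul_le_mul_of_nonneg_left hjk hq₀R.le
        _ ≤ Y := by rwa [mul_one_div]
  · replace hgX := not_le.mp hgX
    refine ⟨0, q₀, fun h => hq₀.ne' (by exact_mod_cast (Prod.mk.inj h).2),
      ⟨0, -1, by simp, by simp⟩, by simpa using hX, ?_⟩
    simp only [Int.cast_natCast, Int.cast_zero, mul_zero, add_zero, abs_of_pos hq₀R]
    nlinarith [mul_lt_mul_of_pos_right hgX hY]

theorem exists_gcd_mul_add_mul_eq_mul (p r q : ℤ) :
    ∃ b m : ℤ, Int.gcd r q * p + b * r = q * m :=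
  ⟨-(Int.gcdA r q * p), Int.gcdB r q * p, by linear_combination p * Int.gcd_eq_gcd_ab r q⟩

theorem stmt_0_general (lam mu z : ℝ) (hsum : lam + mu = 1)
    (p r : ℤ) (q : ℕ) (hq : 1 ≤ q) :
    ∃ a b c : ℤ, (a, b) ≠ (0, 0) ∧ a * p + b * r + c * q = 0 ∧
      |(a : ℝ)| ≤ (q : ℝ) ^ lam ∧ |(b : ℝ) + z * a| ≤ (q : ℝ) ^ mu := by
  set g := Int.gcd r q
  have hg : 0 < g := Int.gcd_pos_of_ne_zero_right r (by omega)
  obtain ⟨q₀, hq₀⟩ : g ∣ q := by simpa using Int.gcd_dvd_natAbs_right r q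
  have hq₀pos : 0 < q₀ := Nat.pos_of_mul_pos_left (hq₀ ▸ hq)
  obtain ⟨r₀, hr₀⟩ : (g : ℤ) ∣ r := Int.gcd_dvd_left r q
  obtain ⟨b₁, m, hb₁⟩ := exists_gcd_mul_add_mul_eq_mul p r q
  have hcov : (g : ℝ) * q₀ ≤ (q : ℝ) ^ lam * (q : ℝ) ^ mu := by
    rw [← rpow_add (by positivity), hsum, rpow_one, hq₀, Nat.cast_mul]
  obtain ⟨a, b, hab, ⟨k, j, rfl, rfl⟩, ha, hb⟩ :=
    exists_ne_zero_triangular_lattice_point hg hq₀pos b₁ z (by positivity) hcov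
  refine ⟨k * g, k * b₁ - j * q₀, j * r₀ - k * m, hab, ?_, ha, hb⟩
  have hq₀Z : (q : ℤ) = g * q₀ := by exact_mod_cast hq₀
  linear_combination k * hb₁ - (j * q₀) * hr₀ + j * r₀ * hq₀Z

theorem stmt_0 (lam mu z : ℝ) (hlam : 0 ≤ lam) (hmu : 0 ≤ mu) (hsum : lam + mu = 1)
    (p r : ℤ) (q : ℕ) (hq : 1 ≤ q) :
    ∃ a b c : ℤ, (a, b) ≠ (0, 0) ∧ a * p + b * r + c * q = 0 ∧
      |(a : ℝ)| ≤ (q : ℝ) ^ lam ∧ |(b : ℝ) + z * a| ≤ (q : ℝ) ^ mu :=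
  stmt_0_general lam mu z hsum p r q hq
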